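/- For every R > 0, the set 𝒫_R is adequate with respect to 𝒮_R. That is: (1) for every A ∈ ℝ^{d×d} (viewed as a vector in ℝ^{d²}) and every P ∈ 𝒫_R, ⟨A⊗A, P⟩ ≥ 0; and (2) for all A, B ∈ ℝ^{d×d} and every P ∈ 𝒫_R, ⟨A⊗B, P⟩² ≤ (sup_{V∈𝒮_R}⟨A,V⟩²)·(sup_{V∈𝒮_R}⟨B,V⟩²). -/

import Mathlib

open MeasureTheory ProbabilityTheory Matrix Finset Real Filter

noncomputable section

namespace Paper

variable {d n : ℕ}

/-- Spectral (operator) norm of a matrix. -/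
def specNorm (A : Matrix (Fin d) (Fin d) ℝ) : ℝ :=
  ‖LinearMap.toContinuousLinearMap (Matrix.toEuclideanLin A)‖

/-- Frobenius norm of a matrix. -/
def frobNorm (A : Matrix (Fin d) (Fin d) ℝ) : ℝ :=
  Real.sqrt (∑ i, ∑ j, (A i j) ^ 2)

/-- Effective rank. -/
def erk (A : Matrix (Fin d) (Fin d) ℝ) : ℝ := A.trace / specNorm A

open Classical in
/-- Positive semidefinite square root (junk value `0` if not psd). -/
def matSqrt (A : Matrix (Fin d) (Fin d) ℝ) : Matrix (Fin d) (Fin d) ℝ :=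
  if h : A.PosSemidef then
    (h.1.eigenvectorUnitary : Matrix (Fin d) (Fin d) ℝ) *
      Matrix.diagonal (fun i => Real.sqrt (h.1.eigenvalues i)) *
      (star h.1.eigenvectorUnitary : Matrix (Fin d) (Fin d) ℝ)
  else 0

/-- Inverse of the positive semidefinite square root. -/
def invSqrt (A : Matrix (Fin d) (Fin d) ℝ) : Matrix (Fin d) (Fin d) ℝ := (matSqrt A)⁻¹

/-- Standard Gaussian measure on ℝ^d. -/
def stdGaussian (d : ℕ) : Measure (Fin d → ℝ) :=
  Measure.pi fun _ => gaussianReal 0 1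

/-- Centered Gaussian measure with covariance S. -/
def gaussianOf (S : Matrix (Fin d) (Fin d) ℝ) : Measure (Fin d → ℝ) :=
  (stdGaussian d).map (matSqrt S).mulVec

/-- Spatial sign (projection on the sphere of radius √d). -/
def spSign (d : ℕ) (x : Fin d → ℝ) : Fin d → ℝ :=
  fun i => Real.sqrt d * x i / Real.sqrt (∑ j, (x j) ^ 2)

/-- Truncated spatial sign with threshold Δ. -/
def truncSign (d : ℕ) (Δ : ℝ) (x : Fin d → ℝ) : Fin d → ℝ :=
  if (∑ i, (x i) ^ 2) < (d : ℝ) - Δ then fun i => Real.sqrt ((d : ℝ) / ((d : ℝ) - Δ)) * x i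
  else if (d : ℝ) + Δ < (∑ i, (x i) ^ 2) then fun i => Real.sqrt ((d : ℝ) / ((d : ℝ) + Δ)) * x i
  else spSign d x

/-- Mean vector of a measure on ℝ^d. -/
def meanVec (μ : Measure (Fin d → ℝ)) : Fin d → ℝ := fun i => ∫ x, x i ∂μ

/-- Covariance matrix of a measure on ℝ^d. -/
def covMatrix (μ : Measure (Fin d → ℝ)) : Matrix (Fin d) (Fin d) ℝ :=
  Matrix.of fun i j => ∫ x, (x i - meanVec μ i) * (x j - meanVec μ j) ∂μ

/-- Inner product of vectors indexed by `ι`. -/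
def inner1 {ι : Type*} [Fintype ι] (v x : ι → ℝ) : ℝ := ∑ j, v j * x j

/-- Inner product of "matrices" indexed by `ι × ι`. -/
def innerM {ι : Type*} [Fintype ι] (P Q : ι → ι → ℝ) : ℝ := ∑ j, ∑ k, P j k * Q j k

/-- Outer product. -/
def outer {ι : Type*} (x y : ι → ℝ) : ι → ι → ℝ := fun j k => x j * y k

/-- sup_{v ∈ V} ⟨v, a⟩². -/
def supInner {ι : Type*} [Fintype ι] (V : Set (ι → ℝ)) (a : ι → ℝ) : ℝ :=
  sSup ((fun v => (inner1 v a) ^ 2) '' V)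

/-- Generalized stability (Definition 4 of the paper). -/
def IsStable {ι : Type*} [Fintype ι] (x : Fin n → ι → ℝ) (ε δ r : ℝ)
    (V : Set (ι → ℝ)) (P : Set (ι → ι → ℝ)) (μ : ι → ℝ) (Q : ι → ι → ℝ) : Prop :=
  ∀ v ∈ V, ∀ p ∈ P, ∀ M : Finset (Fin n), (1 - ε) * (n : ℝ) ≤ (M.card : ℝ) →
    |(M.card : ℝ)⁻¹ * ∑ i ∈ M, inner1 v (fun j => x i j - μ j)| ≤ δ ∧
    |(M.card : ℝ)⁻¹ * ∑ i ∈ M, innerM p (outer (fun j => x i j - μ j) (fun j => x i j - μ j))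
        - innerM p Q| ≤ δ ^ 2 / ε ∧
    |innerM p Q| ≤ r ^ 2

/-- 𝒱 ⊗ 𝒱 ⊆ 𝒫. -/
def TensorSub {ι : Type*} (V : Set (ι → ℝ)) (P : Set (ι → ι → ℝ)) : Prop :=
  ∀ v ∈ V, ∀ v' ∈ V, outer v v' ∈ P

/-- Adequacy of 𝒫 with respect to 𝒱. -/
def Adequate {ι : Type*} [Fintype ι] (V : Set (ι → ℝ)) (P : Set (ι → ι → ℝ)) : Prop :=
  (∀ a : ι → ℝ, ∀ p ∈ P, 0 ≤ innerM p (outer a a)) ∧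
  (∀ a b : ι → ℝ, ∀ p ∈ P, (innerM p (outer a b)) ^ 2 ≤ supInner V a * supInner V b)

/-- The weight set 𝒲_ε. -/
def weightSet (n : ℕ) (ε : ℝ) : Set (Fin n → ℝ) :=
  {w | (∀ i, 0 ≤ w i ∧ w i ≤ 1 / (n : ℝ)) ∧ 1 - ε ≤ ∑ i, w i}

/-- Weighted mean μ_w. -/
def wMean {ι : Type*} (w : Fin n → ℝ) (x : Fin n → ι → ℝ) : ι → ℝ :=
  fun j => (∑ i, w i)⁻¹ * ∑ i, w i * x i j

/-- Weighted covariance Σ_w. -/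
def wCov {ι : Type*} (w : Fin n → ℝ) (x : Fin n → ι → ℝ) : ι → ι → ℝ :=
  fun j k => (∑ i, w i)⁻¹ * ∑ i, w i * (x i j - wMean w x j) * (x i k - wMean w x k)

/-- A d×d matrix viewed as a vector in ℝ^{d²}. -/
def mvec (A : Matrix (Fin d) (Fin d) ℝ) : Fin d × Fin d → ℝ := fun p => A p.1 p.2

/-- Id_d as a vector in ℝ^{d²}. -/
def idVec (d : ℕ) : Fin d × Fin d → ℝ := fun p => if p.1 = p.2 then 1 else 0

/-- 2·Id_{d²}. -/
def twoId (d : ℕ) : (Fin d × Fin d) → (Fin d × Fin d) → ℝ :=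
  fun p q => if p = q then 2 else 0

/-- The Frobenius-norm ball ℬ_R (as vectors in ℝ^{d²}). -/
def ballF (d : ℕ) (R : ℝ) : Set (Fin d × Fin d → ℝ) :=
  {V | ∑ p : Fin d × Fin d, (V p) ^ 2 ≤ R ^ 2}

/-- ℬ_R ⊗ ℬ_R. -/
def ballFT (d : ℕ) (R : ℝ) : Set ((Fin d × Fin d) → (Fin d × Fin d) → ℝ) :=
  {P | ∃ V ∈ ballF d R, ∃ W ∈ ballF d R, P = outer V W}

/-- 𝒮_R = {uuᵀ : ‖u‖ ≤ √R}. -/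
def sphereSet (d : ℕ) (R : ℝ) : Set (Fin d × Fin d → ℝ) :=
  {V | ∃ u : Fin d → ℝ, (∑ i, (u i) ^ 2) ≤ R ∧ V = fun p => u p.1 * u p.2}

/-- 𝒫_R: the set of degree-4 pseudo-expectation moment matrices Ẽ[v^{⊗4}]
under the constraint ‖v‖² ≤ R. -/
def pseudoSet (d : ℕ) (R : ℝ) : Set ((Fin d × Fin d) → (Fin d × Fin d) → ℝ) :=
  {P | ∃ L : MvPolynomial (Fin d) ℝ →ₗ[ℝ] ℝ,
    L 1 = 1 ∧
    (∀ q : MvPolynomial (Fin d) ℝ, q.totalDegree ≤ 2 → 0 ≤ L (q ^ 2)) ∧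
    (∀ q : MvPolynomial (Fin d) ℝ, q.totalDegree ≤ 1 →
      0 ≤ L ((MvPolynomial.C R - ∑ i, MvPolynomial.X i ^ 2) * q ^ 2)) ∧
    P = fun p q => L (MvPolynomial.X p.1 * MvPolynomial.X p.2 *
        MvPolynomial.X q.1 * MvPolynomial.X q.2)}

/-- The Hanson–Wright property of a distribution ρ with mean μv and covariance S. -/
def HansonWright (ρ : Measure (Fin d → ℝ)) (μv : Fin d → ℝ)
    (S : Matrix (Fin d) (Fin d) ℝ) (CHW : ℝ) : Prop :=
  ∀ A : Matrix (Fin d) (Fin d) ℝ, ∀ t : ℝ, 0 < t →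
    ρ {x | t ≤ |(∑ j, ∑ k, ((invSqrt S).mulVec (fun l => x l - μv l)) j * A j k *
        ((invSqrt S).mulVec (fun l => x l - μv l)) k) - A.trace|}
      ≤ ENNReal.ofReal (2 * Real.exp (-(1 / CHW) *
          min (t ^ 2 / (frobNorm A) ^ 2) (t / specNorm A)))

/-- ε-corruption of an indexed family of points. -/
def Corruption {α : Type*} (n : ℕ) (ε : ℝ) (x y : Fin n → α) : Prop :=
  ∃ G : Finset (Fin n), (1 - ε) * (n : ℝ) ≤ (G.card : ℝ) ∧ ∀ i ∈ G, x i = y i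

/-- Entries of the 4-tensor E[(xxᵀ − Id)^{⊗2}] of a measure μ on ℝ^d. -/
def tensorEnt (μ : Measure (Fin d → ℝ)) (i1 i2 i3 i4 : Fin d) : ℝ :=
  ∫ x, (x i1 * x i2 - if i1 = i2 then (1 : ℝ) else 0) *
       (x i3 * x i4 - if i3 = i4 then (1 : ℝ) else 0) ∂μ

/-- E[(xxᵀ − Id)^{⊗2}] as a d²×d² matrix. -/
def tensorQ (μ : Measure (Fin d → ℝ)) : (Fin d × Fin d) → (Fin d × Fin d) → ℝ :=
  fun p q => tensorEnt μ p.1 p.2 q.1 q.2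

/-!
Writing `q_A(v) = vᵀ A v`, the pairing `⟨A ⊗ B, Ẽ[v^{⊗4}]⟩` is `Ẽ[q_A q_B]`, so (1) is positivity
of `Ẽ` on squares, and (2) follows from the Cauchy–Schwarz inequality for `Ẽ` once
`Ẽ[q_A²] ≤ s²` with `s = sup_{‖u‖² ≤ R} |q_A(u)|`. For `c = s / R` both forms `c‖v‖² ± q_A` are
positive semidefinite, hence sums of squares of linear forms, so
`s² - q_A² = (c‖v‖² - q_A)(c‖v‖² + q_A) + c² (R - ‖v‖²)(R + ‖v‖²)`
is a degree-4 certificate on which `Ẽ` is nonnegative.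
-/

open MvPolynomial

section Polynomials

variable {σ : Type*}

def sosDegOne (σ : Type*) : AddSubmonoid (MvPolynomial σ ℝ) :=
  AddSubmonoid.closure {p | ∃ ℓ : MvPolynomial σ ℝ, ℓ.totalDegree ≤ 1 ∧ ℓ ^ 2 = p}

theorem sq_mem_sosDegOne {ℓ : MvPolynomial σ ℝ} (hℓ : ℓ.totalDegree ≤ 1) :
    ℓ ^ 2 ∈ sosDegOne σ :=
  AddSubmonoid.subset_closure ⟨ℓ, hℓ, rfl⟩

theorem map_C_mul (L : MvPolynomial σ ℝ →ₗ[ℝ] ℝ) (a : ℝ) (p : MvPolynomial σ ℝ) :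
    L (C a * p) = a * L p := by
  rw [← smul_eq_C_mul, map_smul, smul_eq_mul]

variable [Fintype σ]

theorem C_add_sumSq_mem_sosDegOne {R : ℝ} (hR : 0 ≤ R) :
    C R + ∑ i, X i ^ 2 ∈ sosDegOne σ := by
  refine add_mem ?_ (sum_mem fun i _ => sq_mem_sosDegOne (totalDegree_X i).le)
  rw [← Real.sq_sqrt hR, map_pow]
  exact sq_mem_sosDegOne (by simp)

def linPoly (a : σ → ℝ) : MvPolynomial σ ℝ := ∑ i, a i • X i

def quadPoly : Matrix σ σ ℝ →ₗ[ℝ] MvPolynomial σ ℝ where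
  toFun M := ∑ i, ∑ j, M i j • (X i * X j)
  map_add' M N := by simp only [Matrix.add_apply, add_smul, Finset.sum_add_distrib]
  map_smul' c M := by
    simp only [Matrix.smul_apply, smul_eq_mul, mul_smul, Finset.smul_sum, RingHom.id_apply]

theorem quadPoly_apply (M : Matrix σ σ ℝ) : quadPoly M = ∑ i, ∑ j, M i j • (X i * X j) := rfl

theorem totalDegree_linPoly_le (a : σ → ℝ) : (linPoly a).totalDegree ≤ 1 :=
  totalDegree_finsetSum_le fun i _ => (totalDegree_smul_le _ _).trans (totalDegree_X i).le

theorem totalDegree_quadPoly_le (M : Matrix σ σ ℝ) : (quadPoly M).totalDegree ≤ 2 :=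
  totalDegree_finsetSum_le fun i _ => totalDegree_finsetSum_le fun j _ =>
    (totalDegree_smul_le _ _).trans <| (totalDegree_mul _ _).trans <|
      add_le_add (totalDegree_X i).le (totalDegree_X j).le

theorem quadPoly_transpose (M : Matrix σ σ ℝ) : quadPoly Mᵀ = quadPoly M := by
  simp only [quadPoly_apply, Matrix.transpose_apply]
  rw [Finset.sum_comm]
  exact Finset.sum_congr rfl fun i _ => Finset.sum_congr rfl fun j _ => by rw [mul_comm (X j)]

theorem quadPoly_one [DecidableEq σ] : quadPoly (1 : Matrix σ σ ℝ) = ∑ i, X i ^ 2 := by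
  simp [quadPoly_apply, Matrix.one_apply, ite_smul, sq]

theorem quadPoly_transpose_mul_self (B : Matrix σ σ ℝ) :
    quadPoly (Bᵀ * B) = ∑ k, linPoly (B k) ^ 2 := by
  simp only [quadPoly_apply, linPoly, sq, Finset.sum_mul_sum, Matrix.mul_apply,
    Matrix.transpose_apply, Finset.sum_smul, smul_mul_smul_comm]
  conv_rhs => rw [Finset.sum_comm]
  exact Finset.sum_congr rfl fun i _ => Finset.sum_comm

open scoped MatrixOrder in
theorem quadPoly_mem_sosDegOne {M : Matrix σ σ ℝ} (hM : ∀ x, 0 ≤ x ⬝ᵥ M *ᵥ x) :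
    quadPoly M ∈ sosDegOne σ := by
  classical
  set S := (1 / 2 : ℝ) • (M + Mᵀ)
  have hS : S.PosSemidef := by
    refine .of_dotProduct_mulVec_nonneg ?_ fun x => ?_
    · simp [S, Matrix.IsHermitian, Matrix.conjTranspose_eq_transpose_of_trivial, add_comm]
    · simp only [star_trivial, S, Matrix.smul_mulVec, Matrix.add_mulVec, dotProduct_smul,
        dotProduct_add, dotProduct_transpose_mulVec, smul_eq_mul]
      linarith [hM x]
  obtain ⟨B, hB⟩ := CStarAlgebra.nonneg_iff_eq_star_mul_self.mp hS.nonneg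
  have hMS : quadPoly M = quadPoly S := by
    simp only [S, map_smul, map_add, quadPoly_transpose]
    module
  rw [hMS, hB, star_eq_conjTranspose, conjTranspose_eq_transpose_of_trivial,
    quadPoly_transpose_mul_self]
  exact sum_mem fun k _ => sq_mem_sosDegOne (totalDegree_linPoly_le _)

theorem abs_dotProduct_mulVec_le_of_forall_ball {M : Matrix σ σ ℝ} {R s : ℝ} (hR : 0 < R)
    (hs : ∀ u, u ⬝ᵥ u ≤ R → |u ⬝ᵥ M *ᵥ u| ≤ s) (x : σ → ℝ) :
    |x ⬝ᵥ M *ᵥ x| ≤ s / R * (x ⬝ᵥ x) := by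
  have hx0 : 0 ≤ x ⬝ᵥ x := by simpa using dotProduct_star_self_nonneg x
  obtain hx | hx := hx0.eq_or_lt
  · simp [dotProduct_self_eq_zero.mp hx.symm]
  set t := √(R / (x ⬝ᵥ x))
  have ht : t ^ 2 * (x ⬝ᵥ x) = R := by
    rw [Real.sq_sqrt (by positivity), div_mul_cancel₀ _ hx.ne']
  have hu := hs (t • x) (by
    rw [dotProduct_smul, smul_dotProduct, smul_eq_mul, smul_eq_mul, ← mul_assoc, ← sq, ht])
  rw [mulVec_smul, dotProduct_smul, smul_dotProduct, smul_eq_mul, smul_eq_mul, ← mul_assoc,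
    ← sq, abs_mul, abs_sq] at hu
  rw [div_mul_eq_mul_div, le_div_iff₀ hR, ← ht]
  calc |x ⬝ᵥ M *ᵥ x| * (t ^ 2 * (x ⬝ᵥ x)) = t ^ 2 * |x ⬝ᵥ M *ᵥ x| * (x ⬝ᵥ x) := by ring
    _ ≤ s * (x ⬝ᵥ x) := mul_le_mul_of_nonneg_right hu hx.le

end Polynomials

section PseudoExpectation

variable {σ : Type*} [Fintype σ] {R : ℝ} {L : MvPolynomial σ ℝ →ₗ[ℝ] ℝ}

structure IsPseudoExpectation (R : ℝ) (L : MvPolynomial σ ℝ →ₗ[ℝ] ℝ) : Prop where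
  map_one : L 1 = 1
  map_sq_nonneg : ∀ q : MvPolynomial σ ℝ, q.totalDegree ≤ 2 → 0 ≤ L (q ^ 2)
  map_ball_mul_sq_nonneg : ∀ q : MvPolynomial σ ℝ, q.totalDegree ≤ 1 →
    0 ≤ L ((C R - ∑ i, X i ^ 2) * q ^ 2)

namespace IsPseudoExpectation

theorem map_C (hL : IsPseudoExpectation R L) (a : ℝ) : L (C a) = a := by
  simpa [hL.map_one] using map_C_mul L a 1

theorem map_mul_sq_le (hL : IsPseudoExpectation R L) {f g : MvPolynomial σ ℝ}
    (hf : f.totalDegree ≤ 2) (hg : g.totalDegree ≤ 2) :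
    L (f * g) ^ 2 ≤ L (f ^ 2) * L (g ^ 2) := by
  have hquad (x : ℝ) : 0 ≤ L (f ^ 2) * (x * x) + 2 * L (f * g) * x + L (g ^ 2) := by
    have hdeg : (C x * f + g).totalDegree ≤ 2 :=
      (totalDegree_add _ _).trans <| max_le ((totalDegree_mul _ _).trans (by simpa using hf)) hg
    have hexp : (C x * f + g) ^ 2 = C (x * x) * f ^ 2 + C (2 * x) * (f * g) + g ^ 2 := by
      simp only [map_mul, map_ofNat]
      ring
    have := hL.map_sq_nonneg _ hdeg
    rw [hexp, map_add, map_add, map_C_mul, map_C_mul] at this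
    linarith
  have := discrim_le_zero hquad
  rw [discrim] at this
  linarith

theorem map_mul_nonneg (hL : IsPseudoExpectation R L) {p q : MvPolynomial σ ℝ}
    (hp : p ∈ sosDegOne σ) (hq : q ∈ sosDegOne σ) : 0 ≤ L (p * q) := by
  induction hp using AddSubmonoid.closure_induction with
  | mem p hp =>
    induction hq using AddSubmonoid.closure_induction with
    | mem q hq =>
      obtain ⟨ℓ, hℓ, rfl⟩ := hp
      obtain ⟨m, hm, rfl⟩ := hq
      rw [← mul_pow]
      exact hL.map_sq_nonneg _ ((totalDegree_mul _ _).trans (by omega))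
    | zero => simp
    | add q q' _ _ h h' => rw [mul_add, map_add]; exact add_nonneg h h'
  | zero => simp
  | add p p' _ _ h h' => rw [add_mul, map_add]; exact add_nonneg h h'

theorem map_ball_mul_nonneg (hL : IsPseudoExpectation R L) {p : MvPolynomial σ ℝ}
    (hp : p ∈ sosDegOne σ) : 0 ≤ L ((C R - ∑ i, X i ^ 2) * p) := by
  induction hp using AddSubmonoid.closure_induction with
  | mem p hp =>
    obtain ⟨ℓ, hℓ, rfl⟩ := hp
    exact hL.map_ball_mul_sq_nonneg ℓ hℓ
  | zero => simp
  | add p p' _ _ h h' => rw [mul_add, map_add]; exact add_nonneg h h'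

theorem map_quadPoly_sq_le [DecidableEq σ] (hL : IsPseudoExpectation R L) (hR : 0 ≤ R)
    {M : Matrix σ σ ℝ} {c : ℝ} (hM : ∀ x, |x ⬝ᵥ M *ᵥ x| ≤ c * (x ⬝ᵥ x)) :
    L (quadPoly M ^ 2) ≤ (c * R) ^ 2 := by
  have hM' (x : σ → ℝ) := abs_le.mp (hM x)
  have hminus : C c * ∑ i, X i ^ 2 - quadPoly M ∈ sosDegOne σ := by
    convert quadPoly_mem_sosDegOne (M := c • 1 - M) fun x => ?_ using 1
    · rw [map_sub, map_smul, quadPoly_one, smul_eq_C_mul]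
    · simp only [Matrix.sub_mulVec, Matrix.smul_mulVec, Matrix.one_mulVec, dotProduct_sub,
        dotProduct_smul, smul_eq_mul]
      linarith [hM' x]
  have hplus : C c * ∑ i, X i ^ 2 + quadPoly M ∈ sosDegOne σ := by
    convert quadPoly_mem_sosDegOne (M := c • 1 + M) fun x => ?_ using 1
    · rw [map_add, map_smul, quadPoly_one, smul_eq_C_mul]
    · simp only [Matrix.add_mulVec, Matrix.smul_mulVec, Matrix.one_mulVec, dotProduct_add,
        dotProduct_smul, smul_eq_mul]
      linarith [hM' x]
  have hcert : L (C (c * R) ^ 2 - quadPoly M ^ 2) =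
      L ((C c * ∑ i, X i ^ 2 - quadPoly M) * (C c * ∑ i, X i ^ 2 + quadPoly M)) +
        c ^ 2 * L ((C R - ∑ i, X i ^ 2) * (C R + ∑ i, X i ^ 2)) := by
    rw [← map_C_mul, ← map_add]
    congr 1
    simp only [map_pow, map_mul]
    ring
  have := add_nonneg (hL.map_mul_nonneg hminus hplus)
    (mul_nonneg (sq_nonneg c) (hL.map_ball_mul_nonneg (C_add_sumSq_mem_sosDegOne hR)))
  rw [← hcert, map_sub, ← map_pow, hL.map_C] at this
  linarith

end IsPseudoExpectation

end PseudoExpectation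

section MatrixSpace

def unvec (A : Fin d × Fin d → ℝ) : Matrix (Fin d) (Fin d) ℝ := Matrix.of fun i j => A (i, j)

theorem quadPoly_unvec (A : Fin d × Fin d → ℝ) :
    quadPoly (unvec A) = ∑ p, A p • (X p.1 * X p.2) := by
  rw [quadPoly_apply, Fintype.sum_prod_type]
  rfl

theorem inner1_outer_self (u : Fin d → ℝ) (A : Fin d × Fin d → ℝ) :
    inner1 (fun p => u p.1 * u p.2) A = u ⬝ᵥ unvec A *ᵥ u := by
  simp only [inner1, Fintype.sum_prod_type, dotProduct, mulVec, Finset.mul_sum, unvec, of_apply]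
  exact Finset.sum_congr rfl fun i _ => Finset.sum_congr rfl fun j _ => by ring

theorem innerM_moments_outer (L : MvPolynomial (Fin d) ℝ →ₗ[ℝ] ℝ) (A B : Fin d × Fin d → ℝ) :
    innerM (fun p q : Fin d × Fin d => L (X p.1 * X p.2 * X q.1 * X q.2)) (outer A B) =
      L (quadPoly (unvec A) * quadPoly (unvec B)) := by
  simp only [quadPoly_unvec, Finset.sum_mul_sum, smul_mul_smul_comm, map_sum, map_smul,
    innerM, outer, smul_eq_mul, mul_assoc]
  exact Finset.sum_congr rfl fun p _ => Finset.sum_congr rfl fun q _ => by ring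

theorem bddAbove_sphereSet (R : ℝ) (A : Fin d × Fin d → ℝ) :
    BddAbove ((fun v => inner1 v A ^ 2) '' sphereSet d R) := by
  refine ⟨R ^ 2 * ∑ p, A p ^ 2, ?_⟩
  rintro _ ⟨_, ⟨u, hu, rfl⟩, rfl⟩
  have hsq : ∑ p : Fin d × Fin d, (u p.1 * u p.2) ^ 2 = (∑ i, u i ^ 2) ^ 2 := by
    simp only [Fintype.sum_prod_type, mul_pow, sq (∑ i, _), Finset.sum_mul_sum]
  calc inner1 (fun p => u p.1 * u p.2) A ^ 2
      ≤ (∑ p : Fin d × Fin d, (u p.1 * u p.2) ^ 2) * ∑ p, A p ^ 2 :=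
        Finset.sum_mul_sq_le_sq_mul_sq _ _ _
    _ ≤ R ^ 2 * ∑ p, A p ^ 2 := by rw [hsq]; gcongr

theorem sq_le_supInner_sphereSet {R : ℝ} (A : Fin d × Fin d → ℝ) {u : Fin d → ℝ}
    (hu : u ⬝ᵥ u ≤ R) : (u ⬝ᵥ unvec A *ᵥ u) ^ 2 ≤ supInner (sphereSet d R) A :=
  le_csSup (bddAbove_sphereSet R A)
    ⟨_, ⟨u, by simpa only [dotProduct, sq] using hu, rfl⟩, by simp only [inner1_outer_self]⟩

theorem supInner_sphereSet_nonneg {R : ℝ} (hR : 0 ≤ R) (A : Fin d × Fin d → ℝ) :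
    0 ≤ supInner (sphereSet d R) A :=
  (sq_nonneg _).trans (sq_le_supInner_sphereSet A (u := 0) (by simpa using hR))

theorem IsPseudoExpectation.map_quadPoly_sq_le_supInner {R : ℝ}
    {L : MvPolynomial (Fin d) ℝ →ₗ[ℝ] ℝ} (hL : IsPseudoExpectation R L) (hR : 0 < R)
    (A : Fin d × Fin d → ℝ) : L (quadPoly (unvec A) ^ 2) ≤ supInner (sphereSet d R) A := by
  set s := √(supInner (sphereSet d R) A)
  have hs (u : Fin d → ℝ) (hu : u ⬝ᵥ u ≤ R) : |u ⬝ᵥ unvec A *ᵥ u| ≤ s :=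
    Real.abs_le_sqrt (sq_le_supInner_sphereSet A hu)
  calc L (quadPoly (unvec A) ^ 2) ≤ (s / R * R) ^ 2 :=
        hL.map_quadPoly_sq_le hR.le (abs_dotProduct_mulVec_le_of_forall_ball hR hs)
    _ = supInner (sphereSet d R) A := by
        rw [div_mul_cancel₀ _ hR.ne', Real.sq_sqrt (supInner_sphereSet_nonneg hR.le A)]

end MatrixSpace

/-- 𝒫_R is adequate with respect to 𝒮_R. -/
theorem pseudoSet_adequate (d : ℕ) (R : ℝ) (hR : 0 < R) :
    (∀ A : Fin d × Fin d → ℝ, ∀ P ∈ pseudoSet d R, 0 ≤ innerM P (outer A A)) ∧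
    (∀ A B : Fin d × Fin d → ℝ, ∀ P ∈ pseudoSet d R,
      (innerM P (outer A B)) ^ 2 ≤
        supInner (sphereSet d R) A * supInner (sphereSet d R) B) := by
  constructor
  · rintro A P ⟨L, -, hL2, -, rfl⟩
    rw [innerM_moments_outer, ← sq]
    exact hL2 _ (totalDegree_quadPoly_le _)
  · rintro A B P ⟨L, hL1, hL2, hL3, rfl⟩
    have hL : IsPseudoExpectation R L := ⟨hL1, hL2, hL3⟩
    rw [innerM_moments_outer]
    calc L (quadPoly (unvec A) * quadPoly (unvec B)) ^ 2
        ≤ L (quadPoly (unvec A) ^ 2) * L (quadPoly (unvec B) ^ 2) :=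
          hL.map_mul_sq_le (totalDegree_quadPoly_le _) (totalDegree_quadPoly_le _)
      _ ≤ supInner (sphereSet d R) A * supInner (sphereSet d R) B :=
          mul_le_mul (hL.map_quadPoly_sq_le_supInner hR A) (hL.map_quadPoly_sq_le_supInner hR B)
            (hL.map_sq_nonneg _ (totalDegree_quadPoly_le _)) (supInner_sphereSet_nonneg hR.le A)

end Paper
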